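/- arXiv:2209.12765 — 8 statements merged into one kernel-verified Lean document; each statement's English description precedes it below -/
import Mathlib

section
/- Let h: ℝ → ℝ be a differentiable function and set γ(ψ) = h(ψ)(cos ψ, sin ψ) + h'(ψ)(−sin ψ, cos ψ). Define S(φ₁,φ₂) = 2 h((φ₁+φ₂)/2) sin((φ₂−φ₁)/2). Then for all φ₁, φ₂, writing ψ = (φ₁+φ₂)/2, one has −∂S/∂φ₁ (φ₁,φ₂) = ⟨γ(ψ), (cos φ₁, sin φ₁)⟩ and ∂S/∂φ₂ (φ₁,φ₂) = ⟨γ(ψ), (cos φ₂, sin φ₂)⟩. (Thus S is a generating function of the billiard map in the (p,φ) coordinates on the space of oriented lines: −∂₁S = p₁, ∂₂S = p₂.) -/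
open Real

/-! Write `ψ = (φ₁ + φ₂)/2` and `φᵢ = ψ ± t`. Both partial derivatives of `S` are derivatives of
`s ↦ 2 h((c + s)/2) sin((s - c)/2)` with the other angle frozen as `c` (for `φ₁` up to a sign), namely
`h'(ψ) sin t + h(ψ) cos t`; and this is exactly `⟨γ(ψ), (cos φ, sin φ)⟩` expanded in the frame
`(cos ψ, sin ψ), (-sin ψ, cos ψ)`, rotated by the angle `t = φ - ψ`. -/

lemma rotatedFrame_inner (a b ψ φ : ℝ) :
    (a * cos ψ + b * (-sin ψ)) * cos φ + (a * sin ψ + b * cos ψ) * sin φ =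
      a * cos (φ - ψ) + b * sin (φ - ψ) := by
  rw [cos_sub, sin_sub]
  ring

lemma hasDerivAt_chordGenerating {h : ℝ → ℝ} {c φ : ℝ}
    (hh : DifferentiableAt ℝ h ((c + φ) / 2)) :
    HasDerivAt (fun s => 2 * h ((c + s) / 2) * sin ((s - c) / 2))
      (deriv h ((c + φ) / 2) * sin ((φ - c) / 2) + h ((c + φ) / 2) * cos ((φ - c) / 2)) φ := by
  have hmid : HasDerivAt (fun s : ℝ => (c + s) / 2) (1 / 2) φ := by
    simpa using ((hasDerivAt_id φ).const_add c).div_const 2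
  have hhalf : HasDerivAt (fun s : ℝ => (s - c) / 2) (1 / 2) φ := by
    simpa using ((hasDerivAt_id φ).sub_const c).div_const 2
  exact (((hh.hasDerivAt.comp φ hmid).const_mul 2).mul hhalf.sin).congr_deriv
    (by simp only [Function.comp_apply]; ring)

/-- the non-standard generating function `S(φ₁,φ₂) = 2h((φ₁+φ₂)/2) sin((φ₂−φ₁)/2)`
is a generating function of the billiard map: `−∂S/∂φ₁ = p₁` and `∂S/∂φ₂ = p₂`, where
`p_i = ⟨γ(ψ), (cos φ_i, sin φ_i)⟩` and `γ(ψ) = h(ψ)(cos ψ, sin ψ) + h'(ψ)(−sin ψ, cos ψ)`. -/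
theorem nonstandard_generating_function
    (h : ℝ → ℝ) (hdiff : Differentiable ℝ h)
    (γ : ℝ → ℝ × ℝ)
    (hγ : ∀ ψ : ℝ, γ ψ = (h ψ * Real.cos ψ + deriv h ψ * (-Real.sin ψ),
                          h ψ * Real.sin ψ + deriv h ψ * Real.cos ψ))
    (S : ℝ → ℝ → ℝ)
    (hS : ∀ φ₁ φ₂ : ℝ, S φ₁ φ₂ = 2 * h ((φ₁ + φ₂) / 2) * Real.sin ((φ₂ - φ₁) / 2)) :
    ∀ φ₁ φ₂ : ℝ,
      (-(deriv (fun s => S s φ₂) φ₁) =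
        (γ ((φ₁ + φ₂) / 2)).1 * Real.cos φ₁ + (γ ((φ₁ + φ₂) / 2)).2 * Real.sin φ₁) ∧
      (deriv (fun s => S φ₁ s) φ₂ =
        (γ ((φ₁ + φ₂) / 2)).1 * Real.cos φ₂ + (γ ((φ₁ + φ₂) / 2)).2 * Real.sin φ₂) := by
  intro φ₁ φ₂
  have hS₁ : (fun s => S s φ₂) = fun s => -(2 * h ((φ₂ + s) / 2) * sin ((s - φ₂) / 2)) := by
    funext s
    rw [hS, add_comm, ← neg_sub, neg_div, sin_neg]
    ring
  have hS₂ : (fun s => S φ₁ s) = fun s => 2 * h ((φ₁ + s) / 2) * sin ((s - φ₁) / 2) :=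
    funext (hS φ₁)
  have ht₁ : φ₁ - (φ₁ + φ₂) / 2 = (φ₁ - φ₂) / 2 := by ring
  have ht₂ : φ₂ - (φ₁ + φ₂) / 2 = (φ₂ - φ₁) / 2 := by ring
  constructor
  · rw [hS₁, deriv.fun_neg, neg_neg, (hasDerivAt_chordGenerating (hdiff _)).deriv, hγ,
      rotatedFrame_inner, ht₁, add_comm φ₂]
    ring
  · rw [hS₂, (hasDerivAt_chordGenerating (hdiff _)).deriv, hγ, rotatedFrame_inner, ht₂]
    ring
end

section
/- Let a > b > 0 and 0 < λ < b². Suppose x = (x₁,x₂) lies on the ellipse E and v = (v₁,v₂) is a unit vector such that the line through x with direction v is tangent to the confocal ellipse E_λ. Then (x₁v₁/a² + x₂v₂/b²)² = λ/(a²b²). (Equivalently, the Joachimsthal quantity J = sin δ / h satisfies J = √λ/(ab).) -/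
/-!
Along the line `t ↦ x + t v`, the equation of `E_λ` becomes, after clearing the denominators
`p = a² - λ` and `q = b² - λ`, the quadratic `A t² + 2 B t + C = 0` whose discriminant is
`4 p q (A - (x₁v₂ - x₂v₁)²)`, with `A = v₁² q + v₂² p`. Tangency means a unique root, hence
`(x₁v₂ - x₂v₁)² = v₁² b² + v₂² a² - λ`. On the other hand, Lagrange's identity for the vectors
`(x₁/a, x₂/b)` and `(b v₁, a v₂)` together with `x ∈ E` gives
`v₁² b² + v₂² a² = a² b² (x₁v₁/a² + x₂v₂/b²)² + (x₁v₂ - x₂v₁)²`.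
-/

theorem existsUnique_of_existsUnique_range {α β : Type*} {f : α → β} (hf : f.Injective)
    {P : β → Prop} (h : ∃! z, (∃ t, z = f t) ∧ P z) : ∃! t, P (f t) := by
  obtain ⟨_, ⟨⟨t, rfl⟩, ht⟩, huniq⟩ := h
  exact ⟨t, ht, fun s hs ↦ hf (huniq (f s) ⟨⟨s, rfl⟩, hs⟩)⟩

theorem injective_line {K : Type*} [CommRing K] [IsDomain K] (x : K × K) {v : K × K}
    (hv : v ≠ 0) : Function.Injective fun t : K ↦ (x.1 + t * v.1, x.2 + t * v.2) := by
  intro s t hst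
  simp only [Prod.mk.injEq, add_right_inj] at hst
  by_cases hv₁ : v.1 = 0
  · have hv₂ : v.2 ≠ 0 := fun hv₂ ↦ hv (Prod.ext hv₁ hv₂)
    exact mul_right_cancel₀ hv₂ hst.2
  · exact mul_right_cancel₀ hv₁ hst.1

theorem line_mem_conic_iff_quadratic {K : Type*} [Field K] {p q : K} (hp : p ≠ 0) (hq : q ≠ 0)
    (x v : K × K) (t : K) :
    (x.1 + t * v.1) ^ 2 / p + (x.2 + t * v.2) ^ 2 / q = 1 ↔
      (v.1 ^ 2 * q + v.2 ^ 2 * p) * (t * t) + 2 * (x.1 * v.1 * q + x.2 * v.2 * p) * t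
        + (x.1 ^ 2 * q + x.2 ^ 2 * p - p * q) = 0 := by
  rw [div_add_div _ _ hp hq, div_eq_one_iff_eq (mul_ne_zero hp hq), ← sub_eq_zero]
  ring_nf

theorem discrim_line_conic {K : Type*} [CommRing K] (p q : K) (x v : K × K) :
    discrim (v.1 ^ 2 * q + v.2 ^ 2 * p) (2 * (x.1 * v.1 * q + x.2 * v.2 * p))
        (x.1 ^ 2 * q + x.2 ^ 2 * p - p * q) =
      4 * p * q * (v.1 ^ 2 * q + v.2 ^ 2 * p - (x.1 * v.2 - x.2 * v.1) ^ 2) := by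
  unfold discrim
  ring

theorem joachimsthal_sq_of_cross_sq {a b lam : ℝ} (ha : a ≠ 0) (hb : b ≠ 0) {x v : ℝ × ℝ}
    (hx : x.1 ^ 2 / a ^ 2 + x.2 ^ 2 / b ^ 2 = 1) (hv : v.1 ^ 2 + v.2 ^ 2 = 1)
    (hcross : (x.1 * v.2 - x.2 * v.1) ^ 2 = v.1 ^ 2 * (b ^ 2 - lam) + v.2 ^ 2 * (a ^ 2 - lam)) :
    (x.1 * v.1 / a ^ 2 + x.2 * v.2 / b ^ 2) ^ 2 = lam / (a ^ 2 * b ^ 2) := by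
  field_simp at hx ⊢
  linear_combination (v.1 ^ 2 * b ^ 2 + v.2 ^ 2 * a ^ 2) * hx - a ^ 2 * b ^ 2 * hcross
    + lam * a ^ 2 * b ^ 2 * hv

theorem joachimsthal_value_general
    (a b lam : ℝ) (hab : b < a) (hb : 0 < b) (hlam : lam < b^2)
    (x v : ℝ × ℝ)
    (hx : x.1^2 / a^2 + x.2^2 / b^2 = 1)
    (hv : v.1^2 + v.2^2 = 1)
    (htan : ∃! z : ℝ × ℝ, (∃ t : ℝ, z = (x.1 + t * v.1, x.2 + t * v.2)) ∧
        z.1^2 / (a^2 - lam) + z.2^2 / (b^2 - lam) = 1) :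
    (x.1 * v.1 / a^2 + x.2 * v.2 / b^2)^2 = lam / (a^2 * b^2) := by
  have hba : b ^ 2 < a ^ 2 := by gcongr
  have hq : 0 < b ^ 2 - lam := by linarith
  have hp : 0 < a ^ 2 - lam := by linarith
  have hroot := existsUnique_of_existsUnique_range
    (injective_line x (by rintro rfl; simp at hv)) htan
  simp only [line_mem_conic_iff_quadratic hp.ne' hq.ne'] at hroot
  have hA : v.1 ^ 2 * (b ^ 2 - lam) + v.2 ^ 2 * (a ^ 2 - lam) ≠ 0 := by
    nlinarith [mul_nonneg (sq_nonneg v.2) (sub_nonneg.2 hba.le)]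
  have hdisc := discrim_eq_zero_of_existsUnique hA hroot
  rw [discrim_line_conic, mul_eq_zero, sub_eq_zero] at hdisc
  exact joachimsthal_sq_of_cross_sq (hb.trans hab).ne' hb.ne' hx hv
    (hdisc.resolve_left (by positivity)).symm

/-- if `x ∈ E` and `v` is a unit vector such that the line through `x`
with direction `v` is tangent to the confocal ellipse `E_λ`, then the Joachimsthal
quantity satisfies `(x₁v₁/a² + x₂v₂/b²)² = λ/(a²b²)`. -/
theorem joachimsthal_value
    (a b lam : ℝ) (hab : b < a) (hb : 0 < b) (hlam0 : 0 < lam) (hlam : lam < b^2)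
    (x v : ℝ × ℝ)
    (hx : x.1^2 / a^2 + x.2^2 / b^2 = 1)
    (hv : v.1^2 + v.2^2 = 1)
    (htan : ∃! z : ℝ × ℝ, (∃ t : ℝ, z = (x.1 + t * v.1, x.2 + t * v.2)) ∧
        z.1^2 / (a^2 - lam) + z.2^2 / (b^2 - lam) = 1) :
    (x.1 * v.1 / a^2 + x.2 * v.2 / b^2)^2 = lam / (a^2 * b^2) :=
  joachimsthal_value_general a b lam hab hb hlam x v hx hv htan
end

section
/- Let a > b > 0 and let x, x' be distinct points on the ellipse E = {x²/a² + y²/b² = 1}. Let v = (x'−x)/‖x'−x‖ be the unit direction of the chord, let N = (x'₁/a², x'₂/b²) be the normal vector to E at x', n = N/‖N‖, and let v' = v − 2⟨v,n⟩n be the billiard reflection of v at x'. Then x₁v₁/a² + x₂v₂/b² = x'₁v'₁/a² + x'₂v'₂/b², i.e. the Joachimsthal quantity ⟨Qx, v⟩ with Q = diag(1/a², 1/b²) is invariant under the billiard reflection in E. -/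
open Real
open scoped RealInnerProductSpace

noncomputable section

abbrev Pt := EuclideanSpace ℝ (Fin 2)

/-!
With `Q` symmetric and `⟨Qx, x⟩ = ⟨Qx', x'⟩ = 1`, expanding gives `⟨Qx + Qx', x' - x⟩ = 0`, so
`⟨Qx, v⟩ = -⟨Qx', v⟩`. Since `Qx'` is a multiple of the unit normal `n`, reflecting `v` at `x'`
negates `⟨Qx', ·⟩`, hence `⟨Qx', v'⟩ = -⟨Qx', v⟩ = ⟨Qx, v⟩`.
-/

section InnerProductSpace

variable {E : Type*} [NormedAddCommGroup E] [InnerProductSpace ℝ E]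

theorem LinearMap.IsSymmetric.inner_smul_sub_eq_neg {T : E →ₗ[ℝ] E} (hT : T.IsSymmetric)
    {x y : E} (h : ⟪T x, x⟫ = ⟪T y, y⟫) (c : ℝ) :
    ⟪T x, c • (y - x)⟫ = -⟪T y, c • (y - x)⟫ := by
  have hxy : ⟪T y, x⟫ = ⟪T x, y⟫ := by rw [hT, real_inner_comm]
  simp only [inner_smul_right, inner_sub_right]
  linear_combination -c * (h + hxy)

theorem inner_sub_two_inner_normalize_smul_eq_neg (N v : E) :
    ⟪N, v - (2 * ⟪v, ‖N‖⁻¹ • N⟫) • (‖N‖⁻¹ • N)⟫ = -⟪N, v⟫ := by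
  rcases eq_or_ne N 0 with rfl | hN
  · simp
  have hnorm : ‖N‖ ≠ 0 := norm_ne_zero_iff.mpr hN
  simp only [inner_sub_right, inner_smul_right, real_inner_self_eq_norm_sq, real_inner_comm N v]
  field_simp
  ring

end InnerProductSpace

def ellipseQ (a b : ℝ) : Pt →ₗ[ℝ] Pt :=
  Matrix.toEuclideanLin (Matrix.diagonal ![(a ^ 2)⁻¹, (b ^ 2)⁻¹])

theorem isSymmetric_ellipseQ (a b : ℝ) : (ellipseQ a b).IsSymmetric :=
  Matrix.isSymmetric_toEuclideanLin_iff.mpr (Matrix.isHermitian_diagonal _)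

theorem ellipseQ_apply (a b : ℝ) (x : Pt) :
    ellipseQ a b x = WithLp.toLp 2 ![x 0 / a ^ 2, x 1 / b ^ 2] := by
  ext i
  fin_cases i <;> simp [ellipseQ, Matrix.toLpLin_apply, div_eq_inv_mul]

theorem inner_ellipseQ (a b : ℝ) (x v : Pt) :
    ⟪ellipseQ a b x, v⟫ = x 0 * v 0 / a ^ 2 + x 1 * v 1 / b ^ 2 := by
  simp only [ellipseQ_apply, PiLp.inner_apply, Fin.sum_univ_two, RCLike.inner_apply,
    conj_trivial, Matrix.cons_val_zero, Matrix.cons_val_one]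
  ring

theorem joachimsthal_invariance_general
    (a b : ℝ)
    (x x' : Pt)
    (hx : (x 0)^2 / a^2 + (x 1)^2 / b^2 = 1)
    (hx' : (x' 0)^2 / a^2 + (x' 1)^2 / b^2 = 1)
    (v N n v' : Pt)
    (hv : v = ‖x' - x‖⁻¹ • (x' - x))
    (hN : N = (WithLp.toLp 2 ![x' 0 / a^2, x' 1 / b^2] : Pt))
    (hn : n = ‖N‖⁻¹ • N)
    (hv' : v' = v - (2 * ⟪v, n⟫) • n) :
    x 0 * v 0 / a^2 + x 1 * v 1 / b^2 = x' 0 * v' 0 / a^2 + x' 1 * v' 1 / b^2 := by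
  have hQx' : ellipseQ a b x' = N := by rw [hN, ellipseQ_apply]
  have hlevel : ⟪ellipseQ a b x, x⟫ = ⟪ellipseQ a b x', x'⟫ := by
    simp only [inner_ellipseQ, ← sq, hx, hx']
  have hchord : ⟪ellipseQ a b x, v⟫ = -⟪N, v⟫ := by
    rw [hv, ← hQx']
    exact (isSymmetric_ellipseQ a b).inner_smul_sub_eq_neg hlevel _
  have hreflect : ⟪N, v'⟫ = -⟪N, v⟫ := by
    rw [hv', hn]
    exact inner_sub_two_inner_normalize_smul_eq_neg N v
  rw [← inner_ellipseQ, ← inner_ellipseQ, hQx', hchord, hreflect]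

/-- the Joachimsthal quantity `⟨Qx, v⟩`, `Q = diag(1/a², 1/b²)`, is invariant
under billiard reflection in the ellipse `E = {x²/a² + y²/b² = 1}`: if `x, x' ∈ E` are
distinct, `v` is the unit direction of the chord from `x` to `x'`, `n` the unit normal at
`x'`, and `v' = v − 2⟨v,n⟩n`, then `x₁v₁/a² + x₂v₂/b² = x'₁v'₁/a² + x'₂v'₂/b²`. -/
theorem joachimsthal_invariance
    (a b : ℝ) (hab : b < a) (hb : 0 < b)
    (x x' : Pt)
    (hx : (x 0)^2 / a^2 + (x 1)^2 / b^2 = 1)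
    (hx' : (x' 0)^2 / a^2 + (x' 1)^2 / b^2 = 1)
    (hne : x ≠ x')
    (v N n v' : Pt)
    (hv : v = ‖x' - x‖⁻¹ • (x' - x))
    (hN : N = (WithLp.toLp 2 ![x' 0 / a^2, x' 1 / b^2] : Pt))
    (hn : n = ‖N‖⁻¹ • N)
    (hv' : v' = v - (2 * ⟪v, n⟫) • n) :
    x 0 * v 0 / a^2 + x 1 * v 1 / b^2 = x' 0 * v' 0 / a^2 + x' 1 * v' 1 / b^2 :=
  joachimsthal_invariance_general a b x x' hx hx' v N n v' hv hN hn hv'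
end
end

section
/- Let a > b > 0, 0 < λ < b², c = √(a²−b²), f = √(a²−λ)/c, J = √λ/(ab), and d = (1 − J²a²)/(J²c²). Then for every ψ ∈ [0, π/2]: ∫₀^ψ dt / (√(a² − c² sin²t) · √(1 − J²a² + J²c² sin²t)) = (1/(c f)) · F(φ, 1/f), where φ = arcsin √( (d+1) sin²ψ / (sin²ψ + d) ). (This is the invariant measure μ([0,ψ]) of the arc [0,ψ] on the invariant curve of the elliptic billiard corresponding to the caustic E_λ.) -/
open Real intervalIntegral

noncomputable section

/-- Incomplete elliptic integral of the first kind. -/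
def ellF (φ k : ℝ) : ℝ := ∫ t in (0:ℝ)..φ, 1 / Real.sqrt (1 - k^2 * Real.sin t ^ 2)

/-!
The substitution `sin² φ = (d + 1) sin² ψ / (sin² ψ + d)`, equivalently
`tan φ = √((d + 1) / d) tan ψ`, has `dφ/dψ = √(d (d + 1)) / (sin² ψ + d)`, and with `k = 1/f`
it turns `1 - k² sin² φ` into a constant multiple of `(a² - c² sin² ψ) / (sin² ψ + d)`.
Since `d = (1 - J² a²) / (J² c²)`, the second factor of the billiard integrand is
`J² c² (sin² ψ + d)`, so the two integrands agree up to the constant factor `1 / (c f)`.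
-/

open Set

-- `sin ψ` rather than `√(sin² ψ)` in the numerator keeps the amplitude smooth at `ψ = 0`.
def amplitude (d ψ : ℝ) : ℝ := arcsin (√(d + 1) * sin ψ / √(sin ψ ^ 2 + d))

section Amplitude

variable {d : ℝ}

lemma sq_amplitude_arg (hd : 0 < d) (t : ℝ) :
    (√(d + 1) * sin t / √(sin t ^ 2 + d)) ^ 2 = (d + 1) * sin t ^ 2 / (sin t ^ 2 + d) := by
  rw [div_pow, mul_pow, sq_sqrt (by linarith), sq_sqrt (by positivity)]

lemma sin_amplitude_sq (hd : 0 < d) (t : ℝ) :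
    sin (amplitude d t) ^ 2 = (d + 1) * sin t ^ 2 / (sin t ^ 2 + d) := by
  have hle : (d + 1) * sin t ^ 2 / (sin t ^ 2 + d) ≤ 1 := by
    rw [div_le_one (by positivity)]
    nlinarith [sin_sq_le_one t]
  rw [← sq_amplitude_arg hd] at hle ⊢
  obtain ⟨h₁, h₂⟩ := abs_le.mp ((sq_le_one_iff_abs_le_one _).mp hle)
  rw [amplitude, sin_arcsin h₁ h₂]

lemma amplitude_eq_arcsin_sqrt (hd : 0 < d) {ψ : ℝ} (hψ : 0 ≤ sin ψ) :
    amplitude d ψ = arcsin √((d + 1) * sin ψ ^ 2 / (sin ψ ^ 2 + d)) := by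
  rw [← sq_amplitude_arg hd,
    sqrt_sq (div_nonneg (mul_nonneg (sqrt_nonneg _) hψ) (sqrt_nonneg _))]
  rfl

lemma amplitude_zero (d : ℝ) : amplitude d 0 = 0 := by
  simp [amplitude]

lemma continuous_amplitude (hd : 0 < d) : Continuous (amplitude d) :=
  continuous_arcsin.comp <| Continuous.div (by fun_prop) (by fun_prop) fun t => by positivity

lemma hasDerivAt_amplitude (hd : 0 < d) {x : ℝ} (hx : 0 < cos x) :
    HasDerivAt (amplitude d) (√(d * (d + 1)) / (sin x ^ 2 + d)) x := by
  have hS : 0 < sin x ^ 2 + d := by positivity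
  have hr : √(sin x ^ 2 + d) ^ 2 = sin x ^ 2 + d := sq_sqrt hS.le
  have hw : HasDerivAt (fun t => √(d + 1) * sin t / √(sin t ^ 2 + d))
      (√(d + 1) * d * cos x / (√(sin x ^ 2 + d) * (sin x ^ 2 + d))) x := by
    have hden := (((hasDerivAt_sin x).fun_pow 2).add_const d).sqrt hS.ne'
    refine (((hasDerivAt_sin x).const_mul (√(d + 1))).fun_div hden
      (sqrt_pos.2 hS).ne').congr_deriv ?_
    field_simp
    rw [hr]
    ring
  have hlt : (√(d + 1) * sin x / √(sin x ^ 2 + d)) ^ 2 < 1 := by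
    rw [sq_amplitude_arg hd, div_lt_one hS]
    nlinarith [sin_sq_add_cos_sq x, mul_pos hx hx]
  have h1w : √(1 - (√(d + 1) * sin x / √(sin x ^ 2 + d)) ^ 2)
      = √d * cos x / √(sin x ^ 2 + d) := by
    rw [sq_amplitude_arg hd, ← sqrt_sq hx.le, ← sqrt_mul hd.le, ← sqrt_div' _ hS.le]
    congr 1
    field_simp
    nlinarith [sin_sq_add_cos_sq x]
  obtain ⟨hm, hp⟩ := abs_lt.mp ((sq_lt_one_iff_abs_lt_one _).mp hlt)
  refine ((hasDerivAt_arcsin hm.ne' hp.ne).comp x hw).congr_deriv ?_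
  rw [h1w, sqrt_mul hd.le]
  field_simp
  rw [sq_sqrt hd.le]

lemma amplitude_integrand_eq (hd : 0 < d) (k t : ℝ) :
    1 / √(1 - k ^ 2 * sin (amplitude d t) ^ 2) * (√(d * (d + 1)) / (sin t ^ 2 + d))
      = √(d * (d + 1)) / (√(sin t ^ 2 + d) * √(d + (1 - k ^ 2 * (d + 1)) * sin t ^ 2)) := by
  have hS : 0 < sin t ^ 2 + d := by positivity
  have h : 1 - k ^ 2 * sin (amplitude d t) ^ 2
      = (d + (1 - k ^ 2 * (d + 1)) * sin t ^ 2) / √(sin t ^ 2 + d) ^ 2 := by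
    rw [sin_amplitude_sq hd, sq_sqrt hS.le]
    field_simp
    ring
  rw [h, sqrt_div' _ (sq_nonneg _), sqrt_sq (sqrt_nonneg _)]
  field_simp
  rw [sq_sqrt hS.le]

theorem ellF_amplitude {k ψ : ℝ} (hd : 0 < d) (hk : k ^ 2 < 1) (hψ : ψ ∈ Icc 0 (π / 2)) :
    ellF (amplitude d ψ) k
      = ∫ t in (0:ℝ)..ψ,
          √(d * (d + 1)) / (√(sin t ^ 2 + d) * √(d + (1 - k ^ 2 * (d + 1)) * sin t ^ 2)) := by
  have hpos : ∀ τ, 0 < 1 - k ^ 2 * sin τ ^ 2 := fun τ => by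
    nlinarith [sin_sq_le_one τ, sq_nonneg k, sq_nonneg (sin τ)]
  have hderiv : ∀ x ∈ Ioo (min 0 ψ) (max 0 ψ),
      HasDerivWithinAt (amplitude d) (√(d * (d + 1)) / (sin x ^ 2 + d)) (Ioi x) x := by
    rintro x ⟨hx₀, hxψ⟩
    rw [min_eq_left hψ.1] at hx₀
    rw [max_eq_right hψ.1] at hxψ
    have hcos : 0 < cos x := cos_pos_of_mem_Ioo ⟨by linarith [pi_pos], hxψ.trans_le hψ.2⟩
    exact (hasDerivAt_amplitude hd hcos).hasDerivWithinAt
  have hderiv_cont : Continuous fun x => √(d * (d + 1)) / (sin x ^ 2 + d) :=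
    continuous_const.div (by fun_prop) fun x => by positivity
  have hg : Continuous fun τ => 1 / √(1 - k ^ 2 * sin τ ^ 2) :=
    continuous_const.div (by fun_prop) fun τ => (sqrt_pos.2 (hpos τ)).ne'
  have hsubst := integral_comp_mul_deriv'' (continuous_amplitude hd).continuousOn hderiv
    hderiv_cont.continuousOn hg.continuousOn
  rw [amplitude_zero] at hsubst
  rw [ellF, ← hsubst]
  exact integral_congr fun t _ => amplitude_integrand_eq hd k t

end Amplitude

lemma billiard_integrand_eq {a c J d f : ℝ} (hc : 0 < c) (hJ : 0 < J) (hf : 0 < f)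
    (hd : 0 < d) (hdJ : 1 - J ^ 2 * a ^ 2 = J ^ 2 * c ^ 2 * d)
    (hfJ : f ^ 2 = (d + 1) * J ^ 2 * a ^ 2) (s : ℝ) :
    1 / (√(a ^ 2 - c ^ 2 * s ^ 2) * √(1 - J ^ 2 * a ^ 2 + J ^ 2 * c ^ 2 * s ^ 2))
      = 1 / (c * f) *
        (√(d * (d + 1)) / (√(s ^ 2 + d) * √(d + (1 - (1 / f) ^ 2 * (d + 1)) * s ^ 2))) := by
  have hA : 1 - J ^ 2 * a ^ 2 + J ^ 2 * c ^ 2 * s ^ 2 = (J * c) ^ 2 * (s ^ 2 + d) := by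
    rw [hdJ]; ring
  have hN : d + (1 - (1 / f) ^ 2 * (d + 1)) * s ^ 2
      = (√(d * (d + 1)) * J / f) ^ 2 * (a ^ 2 - c ^ 2 * s ^ 2) := by
    field_simp
    rw [sq_sqrt (by positivity)]
    linear_combination (d + s ^ 2) * hfJ - (d + 1) * s ^ 2 * hdJ
  have hD : 0 < √(d * (d + 1)) := by positivity
  rw [hA, hN, sqrt_mul (sq_nonneg _), sqrt_mul (sq_nonneg _), sqrt_sq (by positivity),
    sqrt_sq (by positivity)]
  field_simp

lemma caustic_params {a b lam c f J d : ℝ} (hab : b < a) (hb : 0 < b) (hlam0 : 0 < lam)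
    (hlam : lam < b ^ 2) (hc : c = √(a ^ 2 - b ^ 2)) (hf : f = √(a ^ 2 - lam) / c)
    (hJ : J = √lam / (a * b)) (hd : d = (1 - J ^ 2 * a ^ 2) / (J ^ 2 * c ^ 2)) :
    0 < c ∧ 0 < J ∧ 1 < f ∧ 0 < d ∧
      1 - J ^ 2 * a ^ 2 = J ^ 2 * c ^ 2 * d ∧ f ^ 2 = (d + 1) * J ^ 2 * a ^ 2 := by
  have ha : 0 < a := hb.trans hab
  have hba : b ^ 2 < a ^ 2 := by nlinarith
  have hc2 : c ^ 2 = a ^ 2 - b ^ 2 := by rw [hc, sq_sqrt (by linarith)]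
  have hc0 : 0 < c := by rw [hc]; exact sqrt_pos.2 (by linarith)
  have hJ0 : 0 < J := by rw [hJ]; positivity
  have hJ2 : J ^ 2 * (a ^ 2 * b ^ 2) = lam := by rw [hJ, div_pow, sq_sqrt hlam0.le]; field_simp
  have hf2 : f ^ 2 = (a ^ 2 - lam) / c ^ 2 := by rw [hf, div_pow, sq_sqrt (by linarith)]
  have hJa : J ^ 2 * a ^ 2 = lam / b ^ 2 := by rw [← hJ2]; field_simp
  have hd0 : 0 < d := by
    rw [hd, hJa]
    exact div_pos (by rw [sub_pos, div_lt_one (by positivity)]; exact hlam) (by positivity)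
  have hdJ : 1 - J ^ 2 * a ^ 2 = J ^ 2 * c ^ 2 * d := by rw [hd]; field_simp
  have hfJ : f ^ 2 = (d + 1) * J ^ 2 * a ^ 2 := by
    rw [hf2, hd]
    field_simp
    linear_combination hJ2 - a ^ 2 * J ^ 2 * hc2
  have hf1 : 1 < f := by
    rw [← one_lt_sq_iff₀ (hf ▸ by positivity), hf2, one_lt_div (by positivity)]
    linarith
  exact ⟨hc0, hJ0, hf1, hd0, hdJ, hfJ⟩

/-- the invariant measure of the arc `[0,ψ]` on the invariant curve of the
elliptic billiard corresponding to the caustic `E_λ` equals `(1/(cf))·F(φ, 1/f)` with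
`φ = arcsin √((d+1)sin²ψ/(sin²ψ+d))`. -/
theorem invariant_measure_of_arc
    (a b lam : ℝ) (hab : b < a) (hb : 0 < b) (hlam0 : 0 < lam) (hlam : lam < b^2)
    (c f J d : ℝ) (hc : c = Real.sqrt (a^2 - b^2)) (hf : f = Real.sqrt (a^2 - lam) / c)
    (hJ : J = Real.sqrt lam / (a * b)) (hd : d = (1 - J^2 * a^2) / (J^2 * c^2))
    (ψ : ℝ) (hψ : ψ ∈ Set.Icc 0 (π/2))
    (φ : ℝ)
    (hφ : φ = Real.arcsin (Real.sqrt ((d + 1) * Real.sin ψ ^ 2 / (Real.sin ψ ^ 2 + d)))) :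
    (∫ t in (0:ℝ)..ψ, 1 / (Real.sqrt (a^2 - c^2 * Real.sin t ^ 2) *
        Real.sqrt (1 - J^2 * a^2 + J^2 * c^2 * Real.sin t ^ 2))) =
      (1 / (c * f)) * ellF φ (1 / f) := by
  obtain ⟨hc0, hJ0, hf1, hd0, hdJ, hfJ⟩ := caustic_params hab hb hlam0 hlam hc hf hJ hd
  have hsinψ : 0 ≤ sin ψ := sin_nonneg_of_nonneg_of_le_pi hψ.1 (by linarith [hψ.2, pi_pos])
  have hk : (1 / f) ^ 2 < 1 := by
    rw [one_div, inv_pow]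
    exact inv_lt_one_of_one_lt₀ (by nlinarith)
  rw [hφ, ← amplitude_eq_arcsin_sqrt hd0 hsinψ, ellF_amplitude hd0 hk hψ,
    ← integral_const_mul]
  exact integral_congr fun t _ =>
    billiard_integrand_eq hc0 hJ0 (by linarith) hd0 hdJ hfJ (sin t)
end
end

section
/- Let a > b > 0, 0 < λ < b², c = √(a²−b²), f = √(a²−λ)/c, J = √λ/(ab). Then the total invariant measure of the invariant curve equals U := ∫₀^{2π} dψ / (√(a² − c² sin²ψ) · √(1 − J²a² + J²c² sin²ψ)) = (4/(c f)) · K(1/f). -/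
/-!
Parametrize the normal angle `ψ` by the parametric angle `θ` of the point `(a cos θ, b sin θ)`,
so that `b tan ψ = a tan θ`. Then `dψ = a b dθ / (b² cos² θ + a² sin² θ)` and
`sin² ψ = a² sin² θ / (b² cos² θ + a² sin² θ)`, and the invariant density becomes
`dθ / √(b² - λ + c² sin² θ)`. By the symmetries of `sin²`, the integral over `[0, 2π]` is four
times the one over `[0, π/2]`, and after `θ ↦ π/2 - θ` the identity
`b² - λ + c² cos² θ = c² f² (1 - sin² θ / f²)` produces `K(1/f)`.
-/

open Real intervalIntegral

noncomputable section

theorem integral_zero_two_pi_comp_sin_sq {h : ℝ → ℝ} (hh : Continuous fun t => h (sin t ^ 2)) :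
    ∫ t in (0:ℝ)..(2 * π), h (sin t ^ 2) = 4 * ∫ t in (0:ℝ)..(π / 2), h (sin t ^ 2) := by
  have hi (u v : ℝ) := hh.intervalIntegrable (μ := MeasureTheory.volume) u v
  have hshift : ∫ t in π..(2 * π), h (sin t ^ 2) = ∫ t in (0:ℝ)..π, h (sin t ^ 2) := by
    have := integral_comp_add_right (fun t => h (sin t ^ 2)) π (a := 0) (b := π)
    simp only [sin_add_pi, neg_sq, zero_add, ← two_mul] at this
    exact this.symm
  have hreflect : ∫ t in (π / 2)..π, h (sin t ^ 2) = ∫ t in (0:ℝ)..(π / 2), h (sin t ^ 2) := by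
    have := integral_comp_sub_left (fun t => h (sin t ^ 2)) π (a := 0) (b := π / 2)
    rw [sub_zero, sub_half] at this
    simpa [sin_pi_sub] using this.symm
  rw [← integral_add_adjacent_intervals (hi 0 π) (hi π (2 * π)), hshift,
    ← integral_add_adjacent_intervals (hi 0 (π / 2)) (hi (π / 2) π), hreflect]
  ring

theorem integral_zero_pi_div_two_comp_cos_sq (h : ℝ → ℝ) :
    ∫ t in (0:ℝ)..(π / 2), h (cos t ^ 2) = ∫ t in (0:ℝ)..(π / 2), h (sin t ^ 2) := by
  simpa [sin_pi_div_two_sub] using integral_comp_sub_left (fun t => h (sin t ^ 2)) (π / 2)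
    (a := 0) (b := π / 2)

theorem mul_cos_sq_add_mul_sin_sq_pos {p q : ℝ} (hp : 0 < p) (hq : 0 < q) (θ : ℝ) :
    0 < p * cos θ ^ 2 + q * sin θ ^ 2 := by
  rcases eq_or_ne (cos θ) 0 with h | h
  · have : sin θ ^ 2 = 1 := by nlinarith [sin_sq_add_cos_sq θ]
    simpa [h, this]
  · positivity

/-- The normal angle of the ellipse at `(a cos θ, b sin θ)`: `b tan ψ = a tan θ`, written through
`tan (ψ - θ)` so that the branch is smooth on all of `ℝ` and `normalAngle a b (2π) = 2π`. -/
def normalAngle (a b θ : ℝ) : ℝ :=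
  θ + arctan ((a - b) * sin θ * cos θ / (b * cos θ ^ 2 + a * sin θ ^ 2))

section normalAngle

variable {a b : ℝ}

theorem hasDerivAt_normalAngle (ha : 0 < a) (hb : 0 < b) (θ : ℝ) :
    HasDerivAt (normalAngle a b) (a * b / (b ^ 2 * cos θ ^ 2 + a ^ 2 * sin θ ^ 2)) θ := by
  have hN := mul_cos_sq_add_mul_sin_sq_pos hb ha θ
  have hD := mul_cos_sq_add_mul_sin_sq_pos (pow_pos hb 2) (pow_pos ha 2) θ
  have hu : HasDerivAt (fun t => (a - b) * sin t * cos t / (b * cos t ^ 2 + a * sin t ^ 2))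
      ((a - b) * ((cos θ ^ 2 - sin θ ^ 2) * (b * cos θ ^ 2 + a * sin θ ^ 2)
        - 2 * (a - b) * sin θ ^ 2 * cos θ ^ 2) / (b * cos θ ^ 2 + a * sin θ ^ 2) ^ 2) θ :=
    ((((hasDerivAt_sin θ).const_mul (a - b)).mul (hasDerivAt_cos θ)).div
      ((((hasDerivAt_cos θ).pow 2).const_mul b).add (((hasDerivAt_sin θ).pow 2).const_mul a))
      hN.ne').congr_deriv (by simp only [Pi.mul_apply, Pi.add_apply, Pi.pow_apply]; ring)
  refine ((hasDerivAt_id θ).add hu.arctan).congr_deriv ?_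
  field_simp
  linear_combination a * b * (b ^ 2 * cos θ ^ 2 + a ^ 2 * sin θ ^ 2) * (sin θ ^ 2 + cos θ ^ 2) *
    sin_sq_add_cos_sq θ

theorem sin_normalAngle_sq (ha : 0 < a) (hb : 0 < b) (θ : ℝ) :
    sin (normalAngle a b θ) ^ 2 = a ^ 2 * sin θ ^ 2 / (b ^ 2 * cos θ ^ 2 + a ^ 2 * sin θ ^ 2) := by
  have hN := mul_cos_sq_add_mul_sin_sq_pos hb ha θ
  have hsum : sin θ + cos θ * ((a - b) * sin θ * cos θ / (b * cos θ ^ 2 + a * sin θ ^ 2)) =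
      a * sin θ / (b * cos θ ^ 2 + a * sin θ ^ 2) := by
    rw [mul_div_assoc', add_div' _ _ _ hN.ne', div_left_inj' hN.ne']
    linear_combination a * sin θ * sin_sq_add_cos_sq θ
  have hone : 1 + ((a - b) * sin θ * cos θ / (b * cos θ ^ 2 + a * sin θ ^ 2)) ^ 2 =
      (b ^ 2 * cos θ ^ 2 + a ^ 2 * sin θ ^ 2) / (b * cos θ ^ 2 + a * sin θ ^ 2) ^ 2 := by
    field_simp
    linear_combination (b ^ 2 * cos θ ^ 2 + a ^ 2 * sin θ ^ 2) * sin_sq_add_cos_sq θ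
  rw [normalAngle, sin_add, sin_arctan, cos_arctan, mul_one_div, mul_div_assoc', ← add_div,
    div_pow, sq_sqrt (by positivity), hsum, hone]
  field_simp

theorem integral_comp_sin_sq_normalAngle (ha : 0 < a) (hb : 0 < b) {h : ℝ → ℝ}
    (hh : Continuous fun t => h (sin t ^ 2)) :
    ∫ θ in (0:ℝ)..(2 * π), h (a ^ 2 * sin θ ^ 2 / (b ^ 2 * cos θ ^ 2 + a ^ 2 * sin θ ^ 2)) *
        (a * b / (b ^ 2 * cos θ ^ 2 + a ^ 2 * sin θ ^ 2)) =
      ∫ ψ in (0:ℝ)..(2 * π), h (sin ψ ^ 2) := by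
  have hderiv : Continuous fun θ => a * b / (b ^ 2 * cos θ ^ 2 + a ^ 2 * sin θ ^ 2) :=
    continuous_const.div (by fun_prop) fun θ =>
      (mul_cos_sq_add_mul_sin_sq_pos (pow_pos hb 2) (pow_pos ha 2) θ).ne'
  have := integral_comp_mul_deriv (a := 0) (b := 2 * π)
    (fun θ _ => hasDerivAt_normalAngle ha hb θ) hderiv.continuousOn hh
  have h0 : normalAngle a b 0 = 0 := by simp [normalAngle]
  have h2π : normalAngle a b (2 * π) = 2 * π := by simp [normalAngle]
  simpa only [Function.comp_def, sin_normalAngle_sq ha hb, h0, h2π] using this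

end normalAngle

theorem continuous_invariant_density {a b c J : ℝ} (hb : 0 < b) (hc : c ^ 2 = a ^ 2 - b ^ 2)
    (hJ : J ^ 2 * a ^ 2 < 1) :
    Continuous fun t => 1 / (√(a ^ 2 - c ^ 2 * sin t ^ 2) *
      √(1 - J ^ 2 * a ^ 2 + J ^ 2 * c ^ 2 * sin t ^ 2)) := by
  refine continuous_const.div (by fun_prop) fun t => (mul_pos (sqrt_pos.2 ?_) (sqrt_pos.2 ?_)).ne'
  · nlinarith [mul_le_mul_of_nonneg_left (sin_sq_le_one t) (sq_nonneg c)]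
  · nlinarith [mul_nonneg (mul_nonneg (sq_nonneg J) (sq_nonneg c)) (sq_nonneg (sin t))]

theorem invariant_density_comp_normalAngle_mul_deriv {a b c J lam : ℝ} (ha : 0 < a) (hb : 0 < b)
    (hlam : lam < b ^ 2) (hc : c ^ 2 = a ^ 2 - b ^ 2) (hJ : J ^ 2 = lam / (a ^ 2 * b ^ 2))
    (θ : ℝ) :
    1 / (√(a ^ 2 - c ^ 2 * (a ^ 2 * sin θ ^ 2 / (b ^ 2 * cos θ ^ 2 + a ^ 2 * sin θ ^ 2))) *
        √(1 - J ^ 2 * a ^ 2 +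
          J ^ 2 * c ^ 2 * (a ^ 2 * sin θ ^ 2 / (b ^ 2 * cos θ ^ 2 + a ^ 2 * sin θ ^ 2)))) *
      (a * b / (b ^ 2 * cos θ ^ 2 + a ^ 2 * sin θ ^ 2)) =
    1 / √(b ^ 2 - lam + c ^ 2 * sin θ ^ 2) := by
  rw [show b ^ 2 * cos θ ^ 2 + a ^ 2 * sin θ ^ 2 = b ^ 2 + c ^ 2 * sin θ ^ 2 by
    rw [cos_sq', hc]; ring]
  have hx := sq_nonneg (sin θ)
  generalize sin θ ^ 2 = x at hx ⊢
  have hcx := mul_nonneg (sq_nonneg c) hx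
  have hD : 0 < b ^ 2 + c ^ 2 * x := by positivity
  have hE : 0 < b ^ 2 - lam + c ^ 2 * x := by linarith
  have h1 : a ^ 2 - c ^ 2 * (a ^ 2 * x / (b ^ 2 + c ^ 2 * x)) =
      a ^ 2 * b ^ 2 / (b ^ 2 + c ^ 2 * x) := by
    field_simp
    ring
  have h2 : 1 - J ^ 2 * a ^ 2 + J ^ 2 * c ^ 2 * (a ^ 2 * x / (b ^ 2 + c ^ 2 * x)) =
      (b ^ 2 - lam + c ^ 2 * x) / (b ^ 2 + c ^ 2 * x) := by
    rw [hJ]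
    field_simp
    ring
  rw [h1, h2, ← sqrt_mul (by positivity), show a ^ 2 * b ^ 2 / (b ^ 2 + c ^ 2 * x) *
      ((b ^ 2 - lam + c ^ 2 * x) / (b ^ 2 + c ^ 2 * x)) =
      (a * b / (b ^ 2 + c ^ 2 * x)) ^ 2 * (b ^ 2 - lam + c ^ 2 * x) by ring,
    sqrt_mul (sq_nonneg _), sqrt_sq (by positivity)]
  field_simp

theorem one_div_sqrt_eq_ellF_integrand {a b c f lam : ℝ} (hc : 0 < c) (hf : 0 < f)
    (hc2 : c ^ 2 = a ^ 2 - b ^ 2) (hcf : c ^ 2 * f ^ 2 = a ^ 2 - lam) (t : ℝ) :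
    1 / √(b ^ 2 - lam + c ^ 2 * cos t ^ 2) =
      1 / (c * f) * (1 / √(1 - (1 / f) ^ 2 * sin t ^ 2)) := by
  have : b ^ 2 - lam + c ^ 2 * cos t ^ 2 = (c * f) ^ 2 * (1 - (1 / f) ^ 2 * sin t ^ 2) := by
    rw [cos_sq']
    field_simp
    linear_combination hc2 - hcf
  rw [this, sqrt_mul (sq_nonneg _), sqrt_sq (by positivity), one_div_mul_one_div]

/-- the total invariant measure of the invariant curve corresponding to the
caustic `E_λ` equals `U = (4/(cf))·K(1/f)`. -/
theorem total_invariant_measure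
    (a b lam : ℝ) (hab : b < a) (hb : 0 < b) (hlam0 : 0 < lam) (hlam : lam < b^2)
    (c f J : ℝ) (hc : c = Real.sqrt (a^2 - b^2)) (hf : f = Real.sqrt (a^2 - lam) / c)
    (hJ : J = Real.sqrt lam / (a * b)) :
    (∫ t in (0:ℝ)..(2*π), 1 / (Real.sqrt (a^2 - c^2 * Real.sin t ^ 2) *
        Real.sqrt (1 - J^2 * a^2 + J^2 * c^2 * Real.sin t ^ 2))) =
      (4 / (c * f)) * ellF (π/2) (1 / f) := by
  have ha : 0 < a := hb.trans hab
  have hc2 : c ^ 2 = a ^ 2 - b ^ 2 := by rw [hc, sq_sqrt (by nlinarith)]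
  have hc0 : 0 < c := by rw [hc]; exact sqrt_pos.2 (by nlinarith)
  have hf0 : 0 < f := by rw [hf]; exact div_pos (sqrt_pos.2 (by nlinarith)) hc0
  have hcf : c ^ 2 * f ^ 2 = a ^ 2 - lam := by rw [hf, div_pow, sq_sqrt (by nlinarith)]; field_simp
  have hJ2 : J ^ 2 = lam / (a ^ 2 * b ^ 2) := by rw [hJ, div_pow, sq_sqrt hlam0.le, mul_pow]
  have hJa : J ^ 2 * a ^ 2 < 1 := by
    rw [hJ2, div_mul_eq_mul_div, div_lt_one (by positivity)]
    nlinarith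
  have hg : Continuous fun t => 1 / √(b ^ 2 - lam + c ^ 2 * sin t ^ 2) :=
    continuous_const.div (by fun_prop) fun t =>
      (sqrt_pos.2 (by nlinarith [sq_nonneg (c * sin t)])).ne'
  calc _ = ∫ θ in (0:ℝ)..(2 * π), 1 / √(b ^ 2 - lam + c ^ 2 * sin θ ^ 2) := by
        rw [← integral_comp_sin_sq_normalAngle ha hb (continuous_invariant_density hb hc2 hJa)
          (h := fun x => 1 / (√(a ^ 2 - c ^ 2 * x) * √(1 - J ^ 2 * a ^ 2 + J ^ 2 * c ^ 2 * x)))]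
        exact integral_congr fun θ _ =>
          invariant_density_comp_normalAngle_mul_deriv ha hb hlam hc2 hJ2 θ
    _ = 4 * ∫ θ in (0:ℝ)..(π / 2), 1 / √(b ^ 2 - lam + c ^ 2 * cos θ ^ 2) := by
        rw [integral_zero_two_pi_comp_sin_sq (h := fun x => 1 / √(b ^ 2 - lam + c ^ 2 * x)) hg,
          integral_zero_pi_div_two_comp_cos_sq fun x => 1 / √(b ^ 2 - lam + c ^ 2 * x)]
    _ = _ := by
        simp only [ellF, one_div_sqrt_eq_ellF_integrand hc0 hf0 hc2 hcf, integral_const_mul]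
        ring
end
end

section
/- Let a > b > 0, 0 < λ < b², c = √(a²−b²), f = √(a²−λ)/c, J = √λ/(ab), and let θ ∈ (0,π/2) be defined by tan θ = a√λ/(b√(a²−λ)). Then ∫₀^θ dt / (√(a² − c² sin²t) · √(1 − J²a² + J²c² sin²t)) = (1/(c f)) · F(arcsin(√λ/b), 1/f). (This computes the invariant measure of the arc between a vertical billiard chord tangent to E_λ and its reflection, which yields the rotation number formula.) -/
open Real intervalIntegral

noncomputable section

/-!
The substitution `tan ψ = m tan t`, `m = b√(a²-λ) / (a√(b²-λ))`, carries the invariant density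
to `(1/(cf)) dψ / √(1 - sin²ψ / f²)`. In terms of `x = sin² t` both sides become rational: with
`S = a²(b²-λ) + λc²x` one has `1 - J²a² + J²c²x = S / (a²b²)`, `dψ/dt = m a²(b²-λ) / S` and
`1 - sin²ψ / f² = (b²-λ)(a²-c²x) / S`. The endpoint `t = θ` goes to `tan ψ = √λ / √(b²-λ)`,
that is `sin ψ = √λ / b`.
-/

open Set

theorem hasDerivAt_arctan_mul_tan (m : ℝ) {t : ℝ} (ht : cos t ≠ 0) :
    HasDerivAt (fun s => arctan (m * tan s)) (m / (cos t ^ 2 + m ^ 2 * sin t ^ 2)) t := by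
  convert ((hasDerivAt_tan ht).const_mul m).arctan using 1
  rw [tan_eq_sin_div_cos]
  field_simp

theorem sin_sq_arctan_mul_tan (m : ℝ) {t : ℝ} (ht : cos t ≠ 0) :
    sin (arctan (m * tan t)) ^ 2 = m ^ 2 * sin t ^ 2 / (cos t ^ 2 + m ^ 2 * sin t ^ 2) := by
  rw [sin_arctan, div_pow, sq_sqrt (by positivity), tan_eq_sin_div_cos]
  field_simp

theorem cos_pos_of_mem_uIcc_zero {θ t : ℝ} (hθ : θ ∈ Ioo (-(π / 2)) (π / 2))
    (ht : t ∈ uIcc 0 θ) : 0 < cos t :=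
  cos_pos_of_mem_Ioo <|
    ordConnected_Ioo.uIcc_subset ⟨by linarith [pi_pos], by linarith [pi_pos]⟩ hθ ht

theorem integral_comp_arctan_mul_tan (m : ℝ) {θ : ℝ} (hθ : θ ∈ Ioo (-(π / 2)) (π / 2))
    {g : ℝ → ℝ} (hg : Continuous g) :
    ∫ t in (0:ℝ)..θ, g (arctan (m * tan t)) * (m / (cos t ^ 2 + m ^ 2 * sin t ^ 2)) =
      ∫ s in (0:ℝ)..arctan (m * tan θ), g s := by
  have hcos : ∀ t ∈ uIcc 0 θ, 0 < cos t := fun t ht => cos_pos_of_mem_uIcc_zero hθ ht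
  have hdenom : ∀ t ∈ uIcc 0 θ, cos t ^ 2 + m ^ 2 * sin t ^ 2 ≠ 0 := fun t ht =>
    (add_pos_of_pos_of_nonneg (pow_pos (hcos t ht) 2) (by positivity)).ne'
  simpa using integral_comp_mul_deriv (fun t ht => hasDerivAt_arctan_mul_tan m (hcos t ht).ne')
    (continuousOn_const.div (by fun_prop) hdenom) hg

theorem continuous_one_div_sqrt_one_sub_sq_mul_sin_sq {k : ℝ} (hk : k ^ 2 < 1) :
    Continuous fun t => 1 / √(1 - k ^ 2 * sin t ^ 2) :=
  continuous_const.div (by fun_prop) fun t => (sqrt_pos.2 (by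
    nlinarith [mul_le_of_le_one_right (sq_nonneg k) (sin_sq_le_one t)])).ne'

theorem arctan_div_sqrt_sq_sub_sq {y b : ℝ} (hb : 0 < b) (hy : |y| < b) :
    arctan (y / √(b ^ 2 - y ^ 2)) = arcsin (y / b) := by
  have hyb : y ^ 2 < b ^ 2 := sq_lt_sq' (abs_lt.1 hy).1 (abs_lt.1 hy).2
  have hs : 0 < √(b ^ 2 - y ^ 2) := sqrt_pos.2 (by linarith)
  rw [arcsin_eq_arctan (abs_lt.1 (by rwa [abs_div, abs_of_pos hb, div_lt_one hb]))]
  have h1 : 1 - (y / b) ^ 2 = (b ^ 2 - y ^ 2) / b ^ 2 := by field_simp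
  rw [h1, sqrt_div' _ (sq_nonneg b), sqrt_sq hb.le]
  field_simp

section Confocal

variable {a b lam c f J m : ℝ}

theorem one_div_sq_lt_one_of_confocal (hab : b < a) (hb : 0 < b) (hlam : lam < b ^ 2)
    (hc : c = √(a ^ 2 - b ^ 2)) (hf : f = √(a ^ 2 - lam) / c) : (1 / f) ^ 2 < 1 := by
  have hba : 0 < a ^ 2 - b ^ 2 := by nlinarith
  rw [hf, hc, one_div_div, div_pow, sq_sqrt hba.le, sq_sqrt (by linarith),
    div_lt_one (by linarith)]
  linarith

/-- At `x = sin² t`, the right side is the elliptic integrand at `ψ = arctan (m tan t)`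
times `dψ/dt`. -/
theorem invariant_density_eq_pullback (hab : b < a) (hb : 0 < b) (hlam0 : 0 < lam)
    (hlam : lam < b ^ 2) (hc : c = √(a ^ 2 - b ^ 2)) (hf : f = √(a ^ 2 - lam) / c)
    (hJ : J = √lam / (a * b)) (hm : m = b * √(a ^ 2 - lam) / (a * √(b ^ 2 - lam)))
    {x : ℝ} (hx0 : 0 ≤ x) (hx1 : x ≤ 1) :
    1 / (√(a ^ 2 - c ^ 2 * x) * √(1 - J ^ 2 * a ^ 2 + J ^ 2 * c ^ 2 * x)) =
      1 / (c * f) * (1 / √(1 - (1 / f) ^ 2 * (m ^ 2 * x / (1 - x + m ^ 2 * x)))) *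
        (m / (1 - x + m ^ 2 * x)) := by
  have ha : 0 < a := hb.trans hab
  have hba : 0 < a ^ 2 - b ^ 2 := by nlinarith
  have hc2 : c ^ 2 = a ^ 2 - b ^ 2 := hc ▸ sq_sqrt hba.le
  have hc0 : 0 < c := hc ▸ sqrt_pos.2 hba
  have hf0 : 0 < f := hf ▸ div_pos (sqrt_pos.2 (by linarith)) hc0
  have hf2 : f ^ 2 = (a ^ 2 - lam) / (a ^ 2 - b ^ 2) := by
    rw [hf, div_pow, sq_sqrt (by linarith), hc2]
  have hJ2 : J ^ 2 = lam / (a ^ 2 * b ^ 2) := by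
    rw [hJ, div_pow, sq_sqrt hlam0.le, mul_pow]
  have hm0 : 0 < m := hm ▸ div_pos (mul_pos hb (sqrt_pos.2 (by linarith)))
    (mul_pos ha (sqrt_pos.2 (by linarith)))
  have hm2 : m ^ 2 = b ^ 2 * (a ^ 2 - lam) / (a ^ 2 * (b ^ 2 - lam)) := by
    rw [hm, div_pow, mul_pow, mul_pow, sq_sqrt (by linarith), sq_sqrt (by linarith)]
  have hbl : 0 < b ^ 2 - lam := by linarith
  have hal : 0 < a ^ 2 - lam := by linarith
  have hA : 0 < a ^ 2 - c ^ 2 * x := by nlinarith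
  set S := a ^ 2 * (b ^ 2 - lam) + lam * (a ^ 2 - b ^ 2) * x with hS
  have hS0 : 0 < S := by positivity
  have hD : 1 - x + m ^ 2 * x = S / (a ^ 2 * (b ^ 2 - lam)) := by
    rw [hm2, hS]; field_simp; ring
  have hB : 1 - J ^ 2 * a ^ 2 + J ^ 2 * c ^ 2 * x = S / (a ^ 2 * b ^ 2) := by
    rw [hJ2, hc2, hS]; field_simp
  have hE : 1 - (1 / f) ^ 2 * (m ^ 2 * x / (1 - x + m ^ 2 * x)) =
      (b ^ 2 - lam) * (a ^ 2 - c ^ 2 * x) / S := by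
    rw [hD, hm2, one_div, inv_pow, hf2, hc2, hS]; field_simp; ring
  have hBpos : 0 < S / (a ^ 2 * b ^ 2) := by positivity
  have hEpos : 0 < (b ^ 2 - lam) * (a ^ 2 - c ^ 2 * x) / S := div_pos (mul_pos hbl hA) hS0
  rw [hB, hE, hD, ← sq_eq_sq₀ (by positivity) (by positivity)]
  simp only [div_pow, mul_pow, one_pow, sq_sqrt hA.le, sq_sqrt hBpos.le, sq_sqrt hEpos.le]
  rw [hf2, hc2, hm2]
  field_simp

end Confocal

/-- the invariant measure of the arc `[0,θ]`, where `θ ∈ (0,π/2)` is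
defined by `tan θ = a√λ/(b√(a²−λ))`, equals `(1/(cf))·F(arcsin(√λ/b), 1/f)`. -/
theorem invariant_measure_half_chord
    (a b lam : ℝ) (hab : b < a) (hb : 0 < b) (hlam0 : 0 < lam) (hlam : lam < b^2)
    (c f J : ℝ) (hc : c = Real.sqrt (a^2 - b^2)) (hf : f = Real.sqrt (a^2 - lam) / c)
    (hJ : J = Real.sqrt lam / (a * b))
    (θ : ℝ) (hθ : θ ∈ Set.Ioo 0 (π/2))
    (htanθ : Real.tan θ = a * Real.sqrt lam / (b * Real.sqrt (a^2 - lam))) :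
    (∫ t in (0:ℝ)..θ, 1 / (Real.sqrt (a^2 - c^2 * Real.sin t ^ 2) *
        Real.sqrt (1 - J^2 * a^2 + J^2 * c^2 * Real.sin t ^ 2))) =
      (1 / (c * f)) * ellF (Real.arcsin (Real.sqrt lam / b)) (1 / f) := by
  set m := b * √(a ^ 2 - lam) / (a * √(b ^ 2 - lam)) with hm
  have hθ' : θ ∈ Ioo (-(π / 2)) (π / 2) := ⟨by linarith [hθ.1, pi_pos], hθ.2⟩
  have hend : arctan (m * tan θ) = arcsin (√lam / b) := by
    have ha : 0 < a := hb.trans hab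
    have hal : 0 < √(a ^ 2 - lam) := sqrt_pos.2 (by nlinarith)
    have hbl : 0 < √(b ^ 2 - lam) := sqrt_pos.2 (by linarith)
    have hlb : |√lam| < b := by
      rw [abs_of_nonneg (sqrt_nonneg _), sqrt_lt' hb]; exact hlam
    rw [← arctan_div_sqrt_sq_sub_sq hb hlb, sq_sqrt hlam0.le, htanθ, hm]
    congr 1
    field_simp
  calc _ = ∫ t in (0:ℝ)..θ,
          1 / (c * f) * (1 / √(1 - (1 / f) ^ 2 * sin (arctan (m * tan t)) ^ 2)) *
            (m / (cos t ^ 2 + m ^ 2 * sin t ^ 2)) := by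
        refine integral_congr fun t ht => ?_
        rw [sin_sq_arctan_mul_tan m (cos_pos_of_mem_uIcc_zero hθ' ht).ne', cos_sq']
        exact invariant_density_eq_pullback hab hb hlam0 hlam hc hf hJ hm (sq_nonneg _)
          (sin_sq_le_one t)
    _ = 1 / (c * f) * ∫ s in (0:ℝ)..arctan (m * tan θ), 1 / √(1 - (1 / f) ^ 2 * sin s ^ 2) := by
        rw [← integral_const_mul]
        have hk := one_div_sq_lt_one_of_confocal hab hb hlam hc hf
        exact integral_comp_arctan_mul_tan m hθ'
          ((continuous_one_div_sqrt_one_sub_sq_mul_sin_sq hk).const_mul _)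
    _ = _ := by rw [hend, ellF]
end
end

section
/- Let a > b > 0, 0 < λ < b², c = √(a²−b²), f = √(a²−λ)/c, J = √λ/(ab), and write h(ψ) = √(a² cos²ψ + b² sin²ψ). Then ∫₀^{π/2} arcsin(J·h(ψ)) / ( h(ψ) · √(1 − J² h(ψ)²) ) dψ = (π/(2 c f)) · F(arcsin(√λ/b), 1/f). -/
/-!
Both sides reduce to `∫₀¹ dv / √((b² - λ + λv²)(a² - λ + λv²))`. On the left, writing
`arcsin z / √(1 - z²) = ∫₀^{π/2} z sin θ / (1 - z² sin² θ) dθ` makes the integrand an inner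
integral; after exchanging the order of integration the `ψ`-integral is the elementary
`∫₀^{π/2} dψ / (α cos² ψ + β sin² ψ) = π / (2√(αβ))`, and `v = cos θ` finishes. On the right, the
substitution `tan t = tan φ · v` turns the elliptic integral into the same integral.
-/

open Real intervalIntegral

noncomputable section

open MeasureTheory Set

theorem one_sub_mul_sin_sq_pos {p : ℝ} (hp₀ : 0 ≤ p) (hp : p < 1) (θ : ℝ) :
    0 < 1 - p * sin θ ^ 2 := by
  linarith [mul_le_of_le_one_right hp₀ (sin_sq_le_one θ)]

theorem intervalIntegral.integral_integral_swap_of_continuous {F : ℝ → ℝ → ℝ}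
    (hF : Continuous (Function.uncurry F)) {a b c d : ℝ} (hab : a ≤ b) (hcd : c ≤ d) :
    ∫ x in a..b, ∫ y in c..d, F x y = ∫ y in c..d, ∫ x in a..b, F x y := by
  simp only [integral_of_le hab, integral_of_le hcd]
  apply integral_integral_swap
  rw [Measure.prod_restrict, ← Measure.volume_eq_prod]
  exact (hF.continuousOn.integrableOn_compact (isCompact_Icc.prod isCompact_Icc)).mono_set
    (prod_mono Ioc_subset_Icc_self Ioc_subset_Icc_self)

theorem integral_sin_mul_comp_cos {g : ℝ → ℝ} (hg : Continuous g) :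
    ∫ θ in (0:ℝ)..(π/2), sin θ * g (cos θ) = ∫ v in (0:ℝ)..1, g v := by
  have h := integral_comp_mul_deriv (a := 0) (b := π/2) (g := g)
    (fun θ _ => hasDerivAt_cos θ) continuous_sin.neg.continuousOn hg
  simp only [Function.comp, cos_zero, cos_pi_div_two, mul_neg, intervalIntegral.integral_neg] at h
  rw [integral_symm 1 0, ← h, neg_neg]
  simp only [mul_comm]

theorem integral_mul_sin_div_one_sub_sq_mul_sin_sq {z : ℝ} (hz : z ^ 2 < 1) :
    ∫ θ in (0:ℝ)..(π/2), z * sin θ / (1 - z ^ 2 * sin θ ^ 2) = arcsin z / √(1 - z ^ 2) := by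
  have hz' : 1 - z ^ 2 ≠ 0 := by linarith
  set w := √(1 - z ^ 2)
  have hw : 0 < w := sqrt_pos.mpr (by linarith)
  have hw2 : w ^ 2 = 1 - z ^ 2 := sq_sqrt (by linarith)
  have hden := one_sub_mul_sin_sq_pos (sq_nonneg z) hz
  have hderiv : ∀ θ ∈ uIcc (0:ℝ) (π/2), HasDerivAt (fun t => -arctan (z * cos t / w) / w)
      (z * sin θ / (1 - z ^ 2 * sin θ ^ 2)) θ := by
    intro θ _
    have h := ((((hasDerivAt_cos θ).const_mul z).div_const w).arctan).neg.div_const w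
    refine h.congr_deriv ?_
    have := (hden θ).ne'
    have e : 1 + (z * cos θ / w) ^ 2 = (1 - z ^ 2 * sin θ ^ 2) / w ^ 2 := by
      rw [div_pow, mul_pow, cos_sq', hw2]
      field_simp
      ring
    rw [e]
    field_simp
  have hcont : Continuous fun θ => z * sin θ / (1 - z ^ 2 * sin θ ^ 2) :=
    by fun_prop (disch := exact fun θ => (hden θ).ne')
  rw [integral_eq_sub_of_hasDerivAt hderiv (hcont.intervalIntegrable _ _)]
  simp only [cos_pi_div_two, cos_zero, mul_zero, mul_one, zero_div, arctan_zero, neg_zero,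
    sub_neg_eq_add, zero_add, neg_div]
  rw [arcsin_eq_arctan (abs_lt.mp ((sq_lt_one_iff_abs_lt_one z).mp hz))]

theorem arcsin_mul_div_eq_integral {J x : ℝ} (hx : x ≠ 0) (hJx : (J * x) ^ 2 < 1) :
    arcsin (J * x) / (x * √(1 - J ^ 2 * x ^ 2))
      = ∫ θ in (0:ℝ)..(π/2), J * sin θ / (1 - J ^ 2 * x ^ 2 * sin θ ^ 2) := by
  rw [div_mul_eq_div_div_swap, ← mul_pow, ← integral_mul_sin_div_one_sub_sq_mul_sin_sq hJx,
    ← intervalIntegral.integral_div]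
  refine integral_congr fun θ _ => ?_
  field_simp

theorem mul_cos_sq_add_mul_sin_sq_pos_s15 {α β : ℝ} (hα : 0 < α) (hβ : 0 < β) (ψ : ℝ) :
    0 < α * cos ψ ^ 2 + β * sin ψ ^ 2 := by
  nlinarith [sin_sq_add_cos_sq ψ, lt_min hα hβ,
    mul_nonneg (sub_nonneg.2 (min_le_left α β)) (sq_nonneg (cos ψ)),
    mul_nonneg (sub_nonneg.2 (min_le_right α β)) (sq_nonneg (sin ψ))]

theorem continuous_one_div_mul_cos_sq_add_mul_sin_sq {α β : ℝ} (hα : 0 < α) (hβ : 0 < β) :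
    Continuous fun ψ => 1 / (α * cos ψ ^ 2 + β * sin ψ ^ 2) := by
  fun_prop (disch := exact fun ψ => (mul_cos_sq_add_mul_sin_sq_pos_s15 hα hβ ψ).ne')

theorem integral_one_div_mul_cos_sq_add_mul_sin_sq_of_mem_Ioo {α β x : ℝ} (hα : 0 < α)
    (hβ : 0 < β) (hx : x ∈ Ioo (-(π/2)) (π/2)) :
    ∫ ψ in (0:ℝ)..x, 1 / (α * cos ψ ^ 2 + β * sin ψ ^ 2)
      = arctan (√β / √α * tan x) / (√α * √β) := by
  have hderiv : ∀ ψ ∈ uIcc 0 x, HasDerivAt (fun t => arctan (√β / √α * tan t) / (√α * √β))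
      (1 / (α * cos ψ ^ 2 + β * sin ψ ^ 2)) ψ := by
    intro ψ hψ
    have hcos : cos ψ ≠ 0 := (cos_pos_of_mem_Ioo <|
      ordConnected_Ioo.uIcc_subset ⟨by linarith [pi_pos], by linarith [pi_pos]⟩ hx hψ).ne'
    refine (((hasDerivAt_tan hcos).const_mul _).arctan.div_const _).congr_deriv ?_
    have := (mul_cos_sq_add_mul_sin_sq_pos_s15 hα hβ ψ).ne'
    have := sqrt_pos.mpr hα
    have := sqrt_pos.mpr hβ
    rw [tan_eq_sin_div_cos]
    field_simp
    rw [sq_sqrt hα.le, sq_sqrt hβ.le]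
    ring
  rw [integral_eq_sub_of_hasDerivAt hderiv
    ((continuous_one_div_mul_cos_sq_add_mul_sin_sq hα hβ).intervalIntegrable _ _)]
  simp

theorem integral_one_div_mul_cos_sq_add_mul_sin_sq {α β : ℝ} (hα : 0 < α) (hβ : 0 < β) :
    ∫ ψ in (0:ℝ)..(π/2), 1 / (α * cos ψ ^ 2 + β * sin ψ ^ 2) = π / (2 * √(α * β)) := by
  have hπ4 : π / 4 ∈ Ioo (-(π/2)) (π/2) := ⟨by linarith [pi_pos], by linarith [pi_pos]⟩
  have hcont := continuous_one_div_mul_cos_sq_add_mul_sin_sq hα hβ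
  -- the reflection `ψ ↦ π/2 - ψ` exchanges `α` and `β`
  have hreflect : ∫ ψ in (π/4)..(π/2), 1 / (α * cos ψ ^ 2 + β * sin ψ ^ 2)
      = ∫ ψ in (0:ℝ)..(π/4), 1 / (β * cos ψ ^ 2 + α * sin ψ ^ 2) := by
    have h := integral_comp_sub_left (fun ψ => 1 / (β * cos ψ ^ 2 + α * sin ψ ^ 2)) (π/2)
      (a := π/4) (b := π/2)
    simp only [cos_pi_div_two_sub, sin_pi_div_two_sub] at h
    rw [show π / 2 - π / 2 = 0 by ring, show π / 2 - π / 4 = π / 4 by ring] at h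
    simpa only [add_comm] using h
  rw [← integral_add_adjacent_intervals (hcont.intervalIntegrable 0 (π/4))
    (hcont.intervalIntegrable _ _), hreflect,
    integral_one_div_mul_cos_sq_add_mul_sin_sq_of_mem_Ioo hα hβ hπ4,
    integral_one_div_mul_cos_sq_add_mul_sin_sq_of_mem_Ioo hβ hα hπ4, tan_pi_div_four, mul_one,
    mul_one, ← inv_div (√β) (√α), arctan_inv_of_pos (by positivity), sqrt_mul hα.le]
  field_simp
  ring

theorem integral_arcsin_div_eq_integral_sin {α β J : ℝ} (hα : 0 < α) (hβ : 0 < β)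
    (hJα : J ^ 2 * α < 1) (hJβ : J ^ 2 * β < 1) :
    ∫ ψ in (0:ℝ)..(π/2), arcsin (J * √(α * cos ψ ^ 2 + β * sin ψ ^ 2)) /
        (√(α * cos ψ ^ 2 + β * sin ψ ^ 2) * √(1 - J ^ 2 * √(α * cos ψ ^ 2 + β * sin ψ ^ 2) ^ 2))
      = π * J / 2 * ∫ θ in (0:ℝ)..(π/2),
          sin θ / √((1 - J ^ 2 * α * sin θ ^ 2) * (1 - J ^ 2 * β * sin θ ^ 2)) := by
  have hpos : ∀ θ, 0 < 1 - J ^ 2 * α * sin θ ^ 2 ∧ 0 < 1 - J ^ 2 * β * sin θ ^ 2 := fun θ =>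
    ⟨one_sub_mul_sin_sq_pos (by positivity) hJα θ, one_sub_mul_sin_sq_pos (by positivity) hJβ θ⟩
  have hden : ∀ ψ θ, 1 - J ^ 2 * (α * cos ψ ^ 2 + β * sin ψ ^ 2) * sin θ ^ 2
      = (1 - J ^ 2 * α * sin θ ^ 2) * cos ψ ^ 2 + (1 - J ^ 2 * β * sin θ ^ 2) * sin ψ ^ 2 := by
    intro ψ θ
    linear_combination (sin_sq_add_cos_sq ψ).symm
  have hden_pos : ∀ ψ θ, 0 < 1 - J ^ 2 * (α * cos ψ ^ 2 + β * sin ψ ^ 2) * sin θ ^ 2 :=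
    fun ψ θ => hden ψ θ ▸ mul_cos_sq_add_mul_sin_sq_pos_s15 (hpos θ).1 (hpos θ).2 ψ
  have hinner : ∀ ψ, arcsin (J * √(α * cos ψ ^ 2 + β * sin ψ ^ 2)) /
        (√(α * cos ψ ^ 2 + β * sin ψ ^ 2) * √(1 - J ^ 2 * √(α * cos ψ ^ 2 + β * sin ψ ^ 2) ^ 2))
      = ∫ θ in (0:ℝ)..(π/2),
          J * sin θ / (1 - J ^ 2 * (α * cos ψ ^ 2 + β * sin ψ ^ 2) * sin θ ^ 2) := by
    intro ψ
    have hq := mul_cos_sq_add_mul_sin_sq_pos_s15 hα hβ ψ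
    have hJx : (J * √(α * cos ψ ^ 2 + β * sin ψ ^ 2)) ^ 2 < 1 := by
      simpa [mul_pow, sq_sqrt hq.le] using hden_pos ψ (π/2)
    rw [arcsin_mul_div_eq_integral (sqrt_pos.2 hq).ne' hJx, sq_sqrt hq.le]
  simp_rw [hinner]
  rw [integral_integral_swap_of_continuous
    (by fun_prop (disch := exact fun p => (hden_pos p.1 p.2).ne')) (by positivity) (by positivity),
    ← intervalIntegral.integral_const_mul]
  refine integral_congr fun θ _ => ?_
  simp_rw [hden, ← mul_one_div (J * sin θ)]
  rw [intervalIntegral.integral_const_mul,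
    integral_one_div_mul_cos_sq_add_mul_sin_sq (hpos θ).1 (hpos θ).2]
  ring

theorem integral_arcsin_div_eq_integral {α β J : ℝ} (hα : 0 < α) (hβ : 0 < β)
    (hJα : J ^ 2 * α < 1) (hJβ : J ^ 2 * β < 1) :
    ∫ ψ in (0:ℝ)..(π/2), arcsin (J * √(α * cos ψ ^ 2 + β * sin ψ ^ 2)) /
        (√(α * cos ψ ^ 2 + β * sin ψ ^ 2) * √(1 - J ^ 2 * √(α * cos ψ ^ 2 + β * sin ψ ^ 2) ^ 2))
      = π * J / 2 * ∫ v in (0:ℝ)..1,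
          1 / √((1 - J ^ 2 * α + J ^ 2 * α * v ^ 2) * (1 - J ^ 2 * β + J ^ 2 * β * v ^ 2)) := by
  have hfactor_pos : ∀ γ, 0 ≤ γ → γ < 1 → ∀ v : ℝ, 0 < 1 - γ + γ * v ^ 2 := fun γ h₀ h₁ v => by
    nlinarith [mul_nonneg h₀ (sq_nonneg v)]
  have hg : Continuous fun v : ℝ =>
      1 / √((1 - J ^ 2 * α + J ^ 2 * α * v ^ 2) * (1 - J ^ 2 * β + J ^ 2 * β * v ^ 2)) := by
    fun_prop (disch := exact fun v => (sqrt_pos.2 (mul_pos (hfactor_pos _ (by positivity) hJα v)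
      (hfactor_pos _ (by positivity) hJβ v))).ne')
  rw [integral_arcsin_div_eq_integral_sin hα hβ hJα hJβ, ← integral_sin_mul_comp_cos hg]
  congr 1
  refine integral_congr fun θ _ => ?_
  simp only [sin_sq]
  ring_nf

theorem ellF_arcsin_eq_integral {s k : ℝ} (hs : s ^ 2 < 1) (hk : k ^ 2 < 1) :
    ellF (arcsin s) k = s * √(1 - s ^ 2) *
      ∫ v in (0:ℝ)..1,
        1 / √((1 - s ^ 2 + s ^ 2 * v ^ 2) * (1 - s ^ 2 + s ^ 2 * (1 - k ^ 2) * v ^ 2)) := by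
  have hs2 : 0 < 1 - s ^ 2 := by linarith
  set q := s / √(1 - s ^ 2)
  have hq2 : q ^ 2 = s ^ 2 / (1 - s ^ 2) := by rw [div_pow, sq_sqrt hs2.le]
  have hg : Continuous fun t => 1 / √(1 - k ^ 2 * sin t ^ 2) := by
    fun_prop (disch := exact fun t => (sqrt_pos.2 (one_sub_mul_sin_sq_pos (sq_nonneg k) hk t)).ne')
  have hsubst := integral_comp_mul_deriv (a := 0) (b := 1) (f := fun v => arctan (q * v))
    (fun v _ => ((hasDerivAt_id v).const_mul q).arctan)
    (Continuous.continuousOn (by fun_prop (disch := exact fun v => by positivity))) hg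
  simp only [Function.comp, mul_zero, mul_one, arctan_zero, id] at hsubst
  rw [ellF, arcsin_eq_arctan (abs_lt.mp ((sq_lt_one_iff_abs_lt_one s).mp hs)), ← hsubst,
    ← intervalIntegral.integral_const_mul]
  refine integral_congr fun v _ => ?_
  have hP : 0 < 1 - s ^ 2 + s ^ 2 * v ^ 2 := by positivity
  have hQ : 0 < 1 - s ^ 2 + s ^ 2 * (1 - k ^ 2) * v ^ 2 := by
    have : 0 ≤ 1 - k ^ 2 := by linarith
    positivity
  have hsin : 1 - k ^ 2 * sin (arctan (q * v)) ^ 2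
      = (1 - s ^ 2 + s ^ 2 * (1 - k ^ 2) * v ^ 2) / (1 - s ^ 2 + s ^ 2 * v ^ 2) := by
    rw [sin_sq_arctan, mul_pow, hq2]
    field_simp
    ring
  have hderiv : 1 / (1 + (q * v) ^ 2) * q
      = s * √(1 - s ^ 2) / (1 - s ^ 2 + s ^ 2 * v ^ 2) := by
    rw [mul_pow, hq2]
    have := sqrt_pos.2 hs2
    field_simp
    simp only [q]
    field_simp
    rw [sq_sqrt hs2.le]
  rw [hsin, hderiv, sqrt_div hQ.le, sqrt_mul hP.le]
  have := sqrt_pos.2 hP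
  have := sqrt_pos.2 hQ
  field_simp
  rw [sq_sqrt hP.le]

theorem integral_one_div_sqrt_sq_mul {g : ℝ → ℝ} {m : ℝ} (hm : 0 ≤ m) (a b : ℝ) :
    ∫ v in a..b, 1 / √(m ^ 2 * g v) = m⁻¹ * ∫ v in a..b, 1 / √(g v) := by
  simp_rw [sqrt_mul (sq_nonneg m), sqrt_sq hm, one_div, mul_inv]
  exact intervalIntegral.integral_const_mul _ _

def causticIntegral (a b lam : ℝ) : ℝ :=
  ∫ v in (0:ℝ)..1, 1 / √((b ^ 2 - lam + lam * v ^ 2) * (a ^ 2 - lam + lam * v ^ 2))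

theorem integral_arcsin_div_eq_causticIntegral {a b lam : ℝ} (ha : 0 < a) (hb : 0 < b)
    (hlam₀ : 0 ≤ lam) (hlam_a : lam < a ^ 2) (hlam_b : lam < b ^ 2) :
    ∫ ψ in (0:ℝ)..(π/2), arcsin (√lam / (a * b) * √(a ^ 2 * cos ψ ^ 2 + b ^ 2 * sin ψ ^ 2)) /
        (√(a ^ 2 * cos ψ ^ 2 + b ^ 2 * sin ψ ^ 2) *
          √(1 - (√lam / (a * b)) ^ 2 * √(a ^ 2 * cos ψ ^ 2 + b ^ 2 * sin ψ ^ 2) ^ 2))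
      = π * √lam / 2 * causticIntegral a b lam := by
  have hJ2 : (√lam / (a * b)) ^ 2 = lam / (a ^ 2 * b ^ 2) := by
    rw [div_pow, sq_sqrt hlam₀, mul_pow]
  have hJa : (√lam / (a * b)) ^ 2 * a ^ 2 < 1 := by
    rw [hJ2, div_mul_eq_mul_div, div_lt_one (by positivity)]
    nlinarith
  have hJb : (√lam / (a * b)) ^ 2 * b ^ 2 < 1 := by
    rw [hJ2, div_mul_eq_mul_div, div_lt_one (by positivity)]
    nlinarith
  have hP : ∀ v : ℝ, (1 - (√lam / (a * b)) ^ 2 * a ^ 2 + (√lam / (a * b)) ^ 2 * a ^ 2 * v ^ 2) *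
        (1 - (√lam / (a * b)) ^ 2 * b ^ 2 + (√lam / (a * b)) ^ 2 * b ^ 2 * v ^ 2)
      = (a * b)⁻¹ ^ 2 * ((b ^ 2 - lam + lam * v ^ 2) * (a ^ 2 - lam + lam * v ^ 2)) := by
    intro v
    rw [hJ2]
    field_simp
  rw [integral_arcsin_div_eq_integral (by positivity) (by positivity) hJa hJb, causticIntegral]
  simp_rw [hP, integral_one_div_sqrt_sq_mul (inv_nonneg.2 (mul_pos ha hb).le)]
  field_simp

theorem ellF_arcsin_eq_causticIntegral {a b lam k : ℝ} (hb : 0 < b) (hlam₀ : 0 ≤ lam)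
    (hlam_a : lam < a ^ 2) (hlam_b : lam < b ^ 2) (hk : k ^ 2 = (a ^ 2 - b ^ 2) / (a ^ 2 - lam)) :
    ellF (arcsin (√lam / b)) k = √lam * √(a ^ 2 - lam) * causticIntegral a b lam := by
  have hA : 0 < a ^ 2 - lam := by linarith
  have hB : 0 < b ^ 2 - lam := by linarith
  have hs2 : (√lam / b) ^ 2 = lam / b ^ 2 := by rw [div_pow, sq_sqrt hlam₀]
  have hs : (√lam / b) ^ 2 < 1 := by rw [hs2, div_lt_one (by positivity)]; exact hlam_b
  have hk1 : k ^ 2 < 1 := by rw [hk, div_lt_one hA]; linarith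
  have hcos : √(1 - (√lam / b) ^ 2) = √(b ^ 2 - lam) / b := by
    rw [hs2, show 1 - lam / b ^ 2 = (b ^ 2 - lam) / b ^ 2 by field_simp,
      sqrt_div' _ (sq_nonneg b), sqrt_sq hb.le]
  have hP : ∀ v : ℝ, (1 - (√lam / b) ^ 2 + (√lam / b) ^ 2 * v ^ 2) *
        (1 - (√lam / b) ^ 2 + (√lam / b) ^ 2 * (1 - k ^ 2) * v ^ 2)
      = (√(b ^ 2 - lam) / (b ^ 2 * √(a ^ 2 - lam))) ^ 2 *
        ((b ^ 2 - lam + lam * v ^ 2) * (a ^ 2 - lam + lam * v ^ 2)) := by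
    intro v
    rw [hs2, hk, div_pow, mul_pow, sq_sqrt hA.le, sq_sqrt hB.le]
    field_simp
    ring
  rw [ellF_arcsin_eq_integral hs hk1, hcos, causticIntegral]
  simp_rw [hP, integral_one_div_sqrt_sq_mul
    (by positivity : 0 ≤ √(b ^ 2 - lam) / (b ^ 2 * √(a ^ 2 - lam)))]
  have := sqrt_pos.2 hA
  have := sqrt_pos.2 hB
  field_simp

/-- the rotation number of the invariant curve with caustic `E_λ` as the
average of the reflection angle against the invariant measure:
`∫₀^{π/2} arcsin(J·h(ψ))/(h(ψ)√(1−J²h(ψ)²)) dψ = (π/(2cf))·F(arcsin(√λ/b), 1/f)`,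
where `h(ψ) = √(a² cos²ψ + b² sin²ψ)`. -/
theorem rotation_number_integral_identity
    (a b lam : ℝ) (hab : b < a) (hb : 0 < b) (hlam0 : 0 < lam) (hlam : lam < b^2)
    (c f J : ℝ) (hc : c = Real.sqrt (a^2 - b^2)) (hf : f = Real.sqrt (a^2 - lam) / c)
    (hJ : J = Real.sqrt lam / (a * b))
    (h : ℝ → ℝ)
    (hh : ∀ ψ : ℝ, h ψ = Real.sqrt (a^2 * Real.cos ψ ^ 2 + b^2 * Real.sin ψ ^ 2)) :
    (∫ ψ in (0:ℝ)..(π/2),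
        Real.arcsin (J * h ψ) / (h ψ * Real.sqrt (1 - J^2 * h ψ ^ 2))) =
      (π / (2 * c * f)) * ellF (Real.arcsin (Real.sqrt lam / b)) (1 / f) := by
  obtain rfl : h = fun ψ => √(a ^ 2 * cos ψ ^ 2 + b ^ 2 * sin ψ ^ 2) := funext hh
  have ha : 0 < a := hb.trans hab
  have hlam_a : lam < a ^ 2 := by nlinarith
  have hc0 : 0 < c := hc ▸ sqrt_pos.2 (by nlinarith)
  have hf2 : (1 / f) ^ 2 = (a ^ 2 - b ^ 2) / (a ^ 2 - lam) := by
    rw [hf, hc, one_div_div, div_pow, sq_sqrt (by nlinarith), sq_sqrt (by linarith)]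
  rw [hJ, integral_arcsin_div_eq_causticIntegral ha hb hlam0.le hlam_a hlam,
    ellF_arcsin_eq_causticIntegral hb hlam0.le hlam_a hlam hf2, hf]
  have := sqrt_pos.2 (sub_pos.2 hlam_a)
  field_simp
end
end

section
/- Let A > 0 and define f(C) = ∫₀^π √(A + C cos t) dt for C ∈ [0, A). Then f is strictly decreasing on [0, A). -/
/-! Folding `[0, π]` onto `[0, π/2]` by `t ↦ π - t` (which flips the sign of `cos t`) turns the
integral into `∫₀^{π/2} (√(A + C cos t) + √(A - C cos t)) dt`. Since
`(√(A + d) + √(A - d))² = 2A + 2√(A² - d²)` is strictly decreasing in `d ∈ [0, A]`, the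
integrand is decreasing in `C` for every `t ∈ [0, π/2]`, and strictly so at `t = 0`. -/

open Real intervalIntegral

lemma sq_sqrt_add_add_sqrt_sub {A d : ℝ} (hd : |d| ≤ A) :
    (√(A + d) + √(A - d)) ^ 2 = 2 * A + 2 * √(A ^ 2 - d ^ 2) := by
  obtain ⟨hdA, hAd⟩ := abs_le.mp hd
  have hplus : 0 ≤ A + d := by linarith
  have hminus : 0 ≤ A - d := by linarith
  rw [add_sq, sq_sqrt hplus, sq_sqrt hminus, mul_assoc, ← sqrt_mul hplus]
  ring_nf

lemma strictAntiOn_sqrt_add_add_sqrt_sub (A : ℝ) :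
    StrictAntiOn (fun d => √(A + d) + √(A - d)) (Set.Icc 0 A) := by
  intro d₁ ⟨hd₁, hd₁A⟩ d₂ ⟨hd₂, hd₂A⟩ h12
  have hsq : (√(A + d₂) + √(A - d₂)) ^ 2 < (√(A + d₁) + √(A - d₁)) ^ 2 := by
    rw [sq_sqrt_add_add_sqrt_sub (abs_le.mpr ⟨by linarith, hd₁A⟩),
      sq_sqrt_add_add_sqrt_sub (abs_le.mpr ⟨by linarith, hd₂A⟩)]
    have : √(A ^ 2 - d₂ ^ 2) < √(A ^ 2 - d₁ ^ 2) :=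
      sqrt_lt_sqrt (by nlinarith) (by nlinarith)
    linarith
  exact lt_of_pow_lt_pow_left₀ 2 (by positivity) hsq

lemma integral_comp_cos_eq_integral_add_comp_neg_cos {f : ℝ → ℝ} (hf : Continuous f) :
    ∫ t in (0 : ℝ)..π, f (cos t) = ∫ t in (0 : ℝ)..(π / 2), (f (cos t) + f (-cos t)) := by
  have hint : ∀ a b : ℝ, IntervalIntegrable (fun t => f (cos t)) MeasureTheory.volume a b :=
    fun a b => (hf.comp continuous_cos).intervalIntegrable a b
  have hreflect : ∫ t in (π / 2)..π, f (cos t) = ∫ t in (0 : ℝ)..(π / 2), f (-cos t) := by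
    have := integral_comp_sub_left (fun t => f (cos t)) π (a := 0) (b := π / 2)
    rw [show π - π / 2 = π / 2 by ring, sub_zero] at this
    simp only [cos_pi_sub] at this
    exact this.symm
  have hint_neg : IntervalIntegrable (fun t => f (-cos t)) MeasureTheory.volume 0 (π / 2) :=
    (hf.comp continuous_cos.neg).intervalIntegrable 0 (π / 2)
  rw [← integral_add_adjacent_intervals (hint 0 (π / 2)) (hint (π / 2) π), hreflect,
    integral_add (hint 0 (π / 2)) hint_neg]

theorem circumference_integral_strictAnti_general
    (A : ℝ) :
    StrictAntiOn (fun C : ℝ => ∫ t in (0:ℝ)..π, Real.sqrt (A + C * Real.cos t))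
      (Set.Ico 0 A) := by
  intro C₁ ⟨hC₁, _⟩ C₂ ⟨_, hC₂A⟩ h12
  have hcont : ∀ C : ℝ, Continuous fun x => √(A + C * x) := fun C => by fun_prop
  have hfold := fun C => integral_comp_cos_eq_integral_add_comp_neg_cos (hcont C)
  simp only [mul_neg, ← sub_eq_add_neg] at hfold
  simp only [hfold]
  have hφ := strictAntiOn_sqrt_add_add_sqrt_sub A
  refine integral_lt_integral_of_continuousOn_of_le_of_exists_lt (by positivity)
    (by fun_prop) (by fun_prop) (fun t ht => ?_) ⟨0, ⟨le_rfl, by positivity⟩, ?_⟩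
  · have hcos : 0 ≤ cos t := cos_nonneg_of_mem_Icc ⟨by linarith [ht.1, pi_pos], ht.2⟩
    have hcos_le : cos t ≤ 1 := cos_le_one t
    exact hφ.antitoneOn ⟨by positivity, by nlinarith⟩ ⟨by positivity, by nlinarith⟩
      (by nlinarith)
  · simpa only [cos_zero, mul_one] using hφ ⟨hC₁, by linarith⟩ ⟨by linarith, hC₂A.le⟩ h12

/-- for `A > 0`, the function `C ↦ ∫₀^π √(A + C cos t) dt` is strictly
decreasing on `[0, A)`. -/
theorem circumference_integral_strictAnti
    (A : ℝ) (hA : 0 < A) :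
    StrictAntiOn (fun C : ℝ => ∫ t in (0:ℝ)..π, Real.sqrt (A + C * Real.cos t))
      (Set.Ico 0 A) :=
  circumference_integral_strictAnti_general A
end
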